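/- For n ≥ 3, any generating set of the semigroup OCP_{n,n−1} = {α ∈ OCP_n : |im α| ≤ n−1} has at least 2n−1 elements; i.e., rank(OCP_{n,n−1}) ≥ 2n−1. (The set K_{n−1} of elements of image size n−1 falls into exactly 2n−1 distinct kernel classes, and no product of two elements of OCP_{n,n−1} can have image size n−1 with a kernel different from that of its first factor's restriction, so each kernel class needs a representative.) -/

import Mathlib

/-- Partial transformations on the chain with `n` elements. -/
abbrev PT (n : ℕ) := Fin n → Option (Fin n)

/-- Left-to-right composition of partial transformations: `x(f*g) = g(f(x))`. -/
instance PT.instMul (n : ℕ) : Mul (PT n) := ⟨fun f g x => (f x).bind g⟩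

instance PT.instSemigroup (n : ℕ) : Semigroup (PT n) where
  mul_assoc f g h := funext fun x => by
    show ((f x).bind g).bind h = (f x).bind (fun y => (g y).bind h)
    cases f x <;> rfl

/-- Domain of a partial transformation. -/
def dom {n : ℕ} (f : PT n) : Set (Fin n) := {x | (f x).isSome}

/-- Image of a partial transformation. -/
def im {n : ℕ} (f : PT n) : Set (Fin n) := {y | ∃ x, f x = some y}

/-- `f` is a contraction: `|f x - f y| ≤ |x - y|` on its domain. -/
def IsContraction {n : ℕ} (f : PT n) : Prop :=
  ∀ x y a b, f x = some a → f y = some b → Nat.dist a.val b.val ≤ Nat.dist x.val y.val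

/-- `f` is order-preserving on its domain. -/
def IsOP {n : ℕ} (f : PT n) : Prop :=
  ∀ x y a b, f x = some a → f y = some b → x ≤ y → a ≤ b

/-- `f` is order-reversing on its domain. -/
def IsOR {n : ℕ} (f : PT n) : Prop :=
  ∀ x y a b, f x = some a → f y = some b → x ≤ y → b ≤ a

/-!
If `a * w = t` and `|im a| ≤ |im t|`, then `w` must be defined and injective on `im a`, so `t`
has the same kernel (domain included) as `a`. Every generator lies in `OCP_{n,n-1}`, so an element
`t` of image size `n - 1` is either a generator or a product `a * w` whose first factor `a` is a
generator with the same kernel as `t`. Hence a generating set meets each of the `2n - 1` kernels of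
image size `n - 1`, which are realised by the partial identities on `[n] \ {s}` and the total maps
merging `i` and `i + 1`.
-/

lemma Subsemigroup.exists_mem_eq_or_eq_mul_of_mem_closure {M : Type*} [Semigroup M]
    {A : Set M} {x : M} (hx : x ∈ Subsemigroup.closure A) :
    ∃ a ∈ A, x = a ∨ ∃ w, x = a * w := by
  induction hx using Subsemigroup.closure_induction with
  | mem x hx => exact ⟨x, hx, Or.inl rfl⟩
  | mul x y _ _ ihx _ =>
    obtain ⟨a, ha, hxa | ⟨w, hxw⟩⟩ := ihx
    · exact ⟨a, ha, Or.inr ⟨y, by rw [hxa]⟩⟩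
    · exact ⟨a, ha, Or.inr ⟨w * y, by rw [hxw, mul_assoc]⟩⟩

namespace PT

variable {n : ℕ}

lemma mul_apply (f g : PT n) (x : Fin n) : (f * g) x = (f x).bind g := rfl

/-- The kernel of `f`, as a relation whose support is `dom f`: it records the domain as well as the
equivalence on it. -/
def ker (f : PT n) (x y : Fin n) : Prop := ∃ z, f x = some z ∧ f y = some z

def image (w : PT n) (C : Set (Fin n)) : Set (Fin n) := {z | ∃ y ∈ C, w y = some z}

lemma ncard_image_le (w : PT n) (C : Set (Fin n)) : (image w C).ncard ≤ C.ncard :=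
  calc (image w C).ncard = (some '' image w C).ncard :=
        (Set.ncard_image_of_injective _ (Option.some_injective _)).symm
    _ ≤ (w '' C).ncard := by
        refine Set.ncard_le_ncard ?_
        rintro _ ⟨z, ⟨y, hy, hwy⟩, rfl⟩
        exact ⟨y, hy, hwy⟩
    _ ≤ C.ncard := Set.ncard_image_le

lemma im_mul (a w : PT n) : im (a * w) = image w (im a) := by
  ext z
  simp only [im, image, mul_apply, Option.bind_eq_some_iff, Set.mem_ofPred_eq]
  constructor
  · rintro ⟨x, y, hxy, hyz⟩
    exact ⟨y, ⟨x, hxy⟩, hyz⟩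
  · rintro ⟨y, ⟨x, hxy⟩, hyz⟩
    exact ⟨x, y, hxy, hyz⟩

lemma ncard_im_mul_lt {a w : PT n} {y : Fin n} (hy : y ∈ im a)
    (h : im (a * w) ⊆ image w (im a \ {y})) : (im (a * w)).ncard < (im a).ncard :=
  calc (im (a * w)).ncard ≤ (image w (im a \ {y})).ncard := Set.ncard_le_ncard h
    _ ≤ (im a \ {y}).ncard := ncard_image_le w _
    _ < (im a).ncard := Set.ncard_sdiff_singleton_lt_of_mem hy

section NcardImLe

variable {a w : PT n}

lemma isSome_of_mem_im_of_ncard_im_le (h : (im a).ncard ≤ (im (a * w)).ncard) {y : Fin n}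
    (hy : y ∈ im a) : (w y).isSome := by
  by_contra hwy
  refine (ncard_im_mul_lt hy ?_).not_ge h
  rw [im_mul]
  rintro z ⟨y', hy', hwz⟩
  refine ⟨y', ⟨hy', ?_⟩, hwz⟩
  rintro rfl
  simp [hwz] at hwy

lemma injOn_of_ncard_im_le (h : (im a).ncard ≤ (im (a * w)).ncard) : Set.InjOn w (im a) := by
  intro y₁ hy₁ y₂ hy₂ hw
  by_contra hne
  refine (ncard_im_mul_lt hy₂ ?_).not_ge h
  rw [im_mul]
  rintro z ⟨y, hy, hwz⟩
  by_cases hyy : y = y₂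
  · exact ⟨y₁, ⟨hy₁, hne⟩, by rw [hw, ← hyy]; exact hwz⟩
  · exact ⟨y, ⟨hy, hyy⟩, hwz⟩

lemma ker_mul_of_ncard_im_le (h : (im a).ncard ≤ (im (a * w)).ncard) : ker (a * w) = ker a := by
  funext x y
  apply propext
  simp only [ker, mul_apply, Option.bind_eq_some_iff]
  constructor
  · rintro ⟨u, ⟨z₁, hx, hu₁⟩, ⟨z₂, hy, hu₂⟩⟩
    obtain rfl : z₁ = z₂ :=
      injOn_of_ncard_im_le h ⟨x, hx⟩ ⟨y, hy⟩ (hu₁.trans hu₂.symm)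
    exact ⟨z₁, hx, hy⟩
  · rintro ⟨z, hx, hy⟩
    obtain ⟨u, hu⟩ := Option.isSome_iff_exists.1 (isSome_of_mem_im_of_ncard_im_le h ⟨x, hx⟩)
    exact ⟨u, ⟨z, hx, hu⟩, ⟨z, hy, hu⟩⟩

end NcardImLe

lemma exists_mem_ker_eq_of_mem_closure {A : Set (PT n)} {t : PT n}
    (ht : t ∈ Subsemigroup.closure A) (hA : ∀ a ∈ A, (im a).ncard ≤ (im t).ncard) :
    ∃ a ∈ A, ker a = ker t := by
  obtain ⟨a, ha, rfl | ⟨w, rfl⟩⟩ := Subsemigroup.exists_mem_eq_or_eq_mul_of_mem_closure ht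
  · exact ⟨t, ha, rfl⟩
  · exact ⟨a, ha, (ker_mul_of_ncard_im_le (hA a ha)).symm⟩

lemma ncard_ker_image_le {A T : Set (PT n)} (hT : T ⊆ Subsemigroup.closure A)
    (hA : ∀ a ∈ A, ∀ t ∈ T, (im a).ncard ≤ (im t).ncard) : (ker '' T).ncard ≤ A.ncard :=
  calc (ker '' T).ncard ≤ (ker '' A).ncard := by
        refine Set.ncard_le_ncard ?_
        rintro _ ⟨t, ht, rfl⟩
        obtain ⟨a, ha, hker⟩ := exists_mem_ker_eq_of_mem_closure (hT ht) (fun a ha => hA a ha t ht)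
        exact ⟨a, ha, hker⟩
    _ ≤ A.ncard := Set.ncard_image_le

lemma ncard_compl_singleton (s : Fin n) : ({s}ᶜ : Set (Fin n)).ncard = n - 1 := by
  rw [Set.ncard_compl, Set.ncard_singleton, Nat.card_eq_fintype_card, Fintype.card_fin]

def idExcept (s : Fin n) : PT n := fun x => if x = s then none else some x

lemma idExcept_eq_some {s x y : Fin n} : idExcept s x = some y ↔ x ≠ s ∧ y = x := by
  unfold idExcept
  split_ifs with h <;> simp [h, eq_comm]

lemma isOP_idExcept (s : Fin n) : IsOP (idExcept s) := by
  intro x y a b hx hy hxy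
  rw [idExcept_eq_some] at hx hy
  rwa [hx.2, hy.2]

lemma isContraction_idExcept (s : Fin n) : IsContraction (idExcept s) := by
  intro x y a b hx hy
  rw [idExcept_eq_some] at hx hy
  rw [hx.2, hy.2]

lemma im_idExcept (s : Fin n) : im (idExcept s) = {s}ᶜ := by
  ext y
  simp [im, idExcept_eq_some]

lemma ker_idExcept_self (s : Fin n) : ¬ ker (idExcept s) s s := by
  simp [ker, idExcept_eq_some]

lemma ker_idExcept_of_ne {s x : Fin n} (hx : x ≠ s) : ker (idExcept s) x x := by
  simp [ker, idExcept_eq_some, hx]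

def collapse (i : ℕ) (x : Fin n) : Fin n :=
  ⟨if x.val ≤ i then x.val else x.val - 1, by split <;> omega⟩

lemma collapse_val (i : ℕ) (x : Fin n) :
    (collapse i x).val = if x.val ≤ i then x.val else x.val - 1 := rfl

def merge (i : ℕ) : PT n := fun x => some (collapse i x)

lemma isOP_merge (i : ℕ) : IsOP (merge (n := n) i) := by
  rintro x y a b ⟨⟩ ⟨⟩ hxy
  rw [Fin.le_def, collapse_val, collapse_val]
  rw [Fin.le_def] at hxy
  split <;> split <;> omega

lemma isContraction_merge (i : ℕ) : IsContraction (merge (n := n) i) := by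
  rintro x y a b ⟨⟩ ⟨⟩
  simp only [Nat.dist, collapse_val]
  split <;> split <;> omega

lemma im_merge {i : ℕ} (hi : i + 1 < n) : im (merge (n := n) i) = {⟨n - 1, by omega⟩}ᶜ := by
  ext y
  simp only [im, merge, Option.some.injEq, Set.mem_ofPred_eq, Set.mem_compl_singleton_iff,
    ne_eq, Fin.ext_iff, collapse_val]
  constructor
  · rintro ⟨x, hx⟩
    have := x.isLt
    split at hx <;> omega
  · intro hy
    have := y.isLt
    by_cases hyi : y.val ≤ i
    · exact ⟨y, by simp [hyi]⟩
    · exact ⟨⟨y.val + 1, by omega⟩, by simp; omega⟩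

lemma ker_merge_iff (i : ℕ) (x y : Fin n) : ker (merge i) x y ↔ collapse i x = collapse i y := by
  simp [ker, merge, eq_comm]

/-- Representatives of the `2n - 1` kernel classes of elements of `OCP_n` of image size `n - 1`. -/
def kernelRep : Fin n ⊕ Fin (n - 1) → PT n :=
  Sum.elim idExcept (fun i => merge i.val)

lemma isOP_kernelRep (k : Fin n ⊕ Fin (n - 1)) : IsOP (kernelRep k) := by
  cases k with
  | inl s => exact isOP_idExcept s
  | inr i => exact isOP_merge i.val

lemma isContraction_kernelRep (k : Fin n ⊕ Fin (n - 1)) : IsContraction (kernelRep k) := by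
  cases k with
  | inl s => exact isContraction_idExcept s
  | inr i => exact isContraction_merge i.val

lemma ncard_im_kernelRep (k : Fin n ⊕ Fin (n - 1)) : (im (kernelRep k)).ncard = n - 1 := by
  cases k with
  | inl s => rw [kernelRep, Sum.elim_inl, im_idExcept, ncard_compl_singleton]
  | inr i =>
    have hi := i.isLt
    rw [kernelRep, Sum.elim_inr, im_merge (by omega), ncard_compl_singleton]

lemma injective_ker_comp_kernelRep : Function.Injective (ker ∘ kernelRep (n := n)) := by
  rintro (s | i) (s' | i') h <;> simp only [Function.comp_apply, kernelRep, Sum.elim_inl,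
    Sum.elim_inr] at h
  · by_contra hne
    have hs : s ≠ s' := fun hs => hne (hs ▸ rfl)
    exact ker_idExcept_self s (h ▸ ker_idExcept_of_ne hs)
  · exact absurd (h ▸ (ker_merge_iff _ s s).2 rfl) (ker_idExcept_self s)
  · exact absurd (h ▸ (ker_merge_iff _ s' s').2 rfl) (ker_idExcept_self s')
  · have hi := i.isLt
    have hmerged := (ker_merge_iff (n := n) i.val ⟨i.val, by omega⟩ ⟨i.val + 1, by omega⟩).2
      (by simp [Fin.ext_iff, collapse_val])
    rw [h, ker_merge_iff, Fin.ext_iff, collapse_val, collapse_val] at hmerged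
    have : i.val = i'.val := by simp only at hmerged; split at hmerged <;> split at hmerged <;> omega
    exact congrArg Sum.inr (Fin.ext this)

end PT

open PT in
theorem stmt_12_general {n : ℕ} (A : Set (PT n))
    (hA : (Subsemigroup.closure A : Set (PT n)) =
      {f : PT n | IsOP f ∧ IsContraction f ∧ (im f).ncard ≤ n - 1}) :
    2 * n - 1 ≤ A.ncard := by
  have hA_le : ∀ a ∈ A, (im a).ncard ≤ n - 1 := by
    intro a ha
    have h : a ∈ (Subsemigroup.closure A : Set (PT n)) := Subsemigroup.subset_closure ha
    rw [hA] at h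
    exact h.2.2
  have hrep : Set.range kernelRep ⊆ (Subsemigroup.closure A : Set (PT n)) := by
    rintro _ ⟨k, rfl⟩
    rw [hA]
    exact ⟨isOP_kernelRep k, isContraction_kernelRep k, (ncard_im_kernelRep k).le⟩
  calc 2 * n - 1 = (ker '' Set.range kernelRep).ncard := by
        rw [← Set.range_comp, Set.ncard_range_of_injective injective_ker_comp_kernelRep,
          Nat.card_sum, Nat.card_fin, Nat.card_fin]
        omega
    _ ≤ A.ncard := ncard_ker_image_le hrep fun a ha _ ⟨k, hk⟩ => by
        rw [← hk, ncard_im_kernelRep]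
        exact hA_le a ha

/-- any generating set of `OCP_{n,n-1}` has at least `2n-1` elements. -/
theorem stmt_12 {n : ℕ} (hn : 3 ≤ n) (A : Set (PT n))
    (hA : (Subsemigroup.closure A : Set (PT n)) =
      {f : PT n | IsOP f ∧ IsContraction f ∧ (im f).ncard ≤ n - 1}) :
    2 * n - 1 ≤ A.ncard :=
  stmt_12_general A hA
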